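/- If a chord diagram contains a trigon of type B, then there is a chord of the trigon such that the I-move at that chord produces a chord diagram containing a coherent bigon (formed by the remaining two chords of the trigon). (Content of the proof of the paper's Lemma 2.4.) -/

import Mathlib

/-!
Chord diagrams modeling spherical curves (Gauss diagrams).

A chord diagram with `n` chords is a fixed-point-free involution `f` on the
cyclically ordered set `ZMod (2*n)`; the unordered pairs `{a, f a}` are its chords.
-/

namespace SphericalCurveReductivity

/-- `x` lies in the open arc from `a` to `b` (in the positive cyclic direction). -/
def InArc {N : ℕ} (a b x : ZMod N) : Prop :=
  0 < (x - a).val ∧ (x - a).val < (b - a).val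

/-- The chord `{a, f a}` crosses the chord `{c, f c}`: the four endpoints are pairwise
distinct and exactly one of `c`, `f c` lies in the open arc from `a` to `f a`. -/
def Crosses {N : ℕ} (f : ZMod N → ZMod N) (a c : ZMod N) : Prop :=
  c ≠ a ∧ c ≠ f a ∧ f c ≠ a ∧ f c ≠ f a ∧
    Xor' (InArc a (f a) c) (InArc a (f a) (f c))

/-- A chord diagram is reducible if some chord crosses no other chord. -/
def Reducible {N : ℕ} (f : ZMod N → ZMod N) : Prop :=
  ∃ a, ∀ c, ¬ Crosses f a c

/-- The embedding of the points of the new chord diagram (after the I-move at the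
chord `{a, b}`) into the old one: the points `a`, `b` are deleted and the points of
the open arc from `a` to `b` appear in reversed order, followed by the points of the
open arc from `b` to `a` in their original order. -/
def imoveEmb (n : ℕ) (a b : ZMod (2 * n)) (k : ZMod (2 * (n - 1))) : ZMod (2 * n) :=
  if k.val + 1 < (b - a).val then a + (((b - a).val - 1 - k.val : ℕ) : ZMod (2 * n))
  else a + ((k.val + 2 : ℕ) : ZMod (2 * n))

/-- The induced map of points of the old chord diagram (other than `a`, `b`) to points
of the new chord diagram after the I-move at the chord `{a, b}`; inverse to `imoveEmb`. -/
def imoveProj (n : ℕ) (a b : ZMod (2 * n)) (x : ZMod (2 * n)) : ZMod (2 * (n - 1)) :=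
  if (x - a).val < (b - a).val then (((b - a).val - 1 - (x - a).val : ℕ) : ZMod (2 * (n - 1)))
  else (((x - a).val - 2 : ℕ) : ZMod (2 * (n - 1)))

/-- The I-move (inverse-half-twisted splice) at the chord `{a, f a}`: delete the two
points `a`, `f a` and reverse the order of the points along the open arc from `a`
to `f a`, producing a chord diagram with `n - 1` chords. -/
def IMove {n : ℕ} (f : ZMod (2 * n) → ZMod (2 * n)) (a : ZMod (2 * n))
    (k : ZMod (2 * (n - 1))) : ZMod (2 * (n - 1)) :=
  imoveProj n a (f a) (f (imoveEmb n a (f a) k))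

/-- `ReductivityLe m f` : the reductivity of the chord diagram `f` is at most `m`,
i.e. at most `m` successive I-moves transform `f` into a reducible chord diagram. -/
def ReductivityLe : ℕ → ∀ {n : ℕ}, (ZMod (2 * n) → ZMod (2 * n)) → Prop
  | 0, _, f => Reducible f
  | m + 1, n, f => Reducible f ∨ ∃ a : ZMod (2 * n), ReductivityLe m (IMove f a)

/-- An incoherent bigon: the two chords `{i, j}` and `{i+1, j+1}` with the four
endpoints pairwise distinct. -/
def IncoherentBigon {N : ℕ} (f : ZMod N → ZMod N) (i j : ZMod N) : Prop :=
  f i = j ∧ f (i + 1) = j + 1 ∧ ({i, j, i + 1, j + 1} : Finset (ZMod N)).card = 4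

/-- A coherent bigon: the two chords `{i, j+1}` and `{i+1, j}` with the four
endpoints pairwise distinct. -/
def CoherentBigon {N : ℕ} (f : ZMod N → ZMod N) (i j : ZMod N) : Prop :=
  f i = j + 1 ∧ f (i + 1) = j ∧ ({i, j, i + 1, j + 1} : Finset (ZMod N)).card = 4

/-- The six endpoints of a trigon with corners at the consecutive pairs
`(i, i+1)`, `(j, j+1)`, `(k, k+1)`. -/
def trigonSet {N : ℕ} (i j k : ZMod N) : Finset (ZMod N) :=
  {i, i + 1, j, j + 1, k, k + 1}

/-- A trigon: three chords whose six endpoints form the three pairs of cyclically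
consecutive points `(i, i+1)`, `(j, j+1)`, `(k, k+1)` (pairwise distinct), such that no
chord joins the two points of one of these pairs, so that the three chords connect the
three consecutive pairs in a triangle. -/
def Trigon {N : ℕ} (f : ZMod N → ZMod N) (i j k : ZMod N) : Prop :=
  (trigonSet i j k).card = 6 ∧
  (∀ x ∈ trigonSet i j k, f x ∈ trigonSet i j k) ∧
  f i ≠ i + 1 ∧ f j ≠ j + 1 ∧ f k ≠ k + 1

/-- A representative point of the third chord of a trigon (the chord not containing
`i` nor `i + 1`). -/
def trigonThird {N : ℕ} (f : ZMod N → ZMod N) (i j : ZMod N) : ZMod N :=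
  if j = f i ∨ j = f (i + 1) then j + 1 else j

/-- Exactly two of three propositions hold. -/
def ExactlyTwo (p q r : Prop) : Prop :=
  (p ∧ q ∧ ¬r) ∨ (p ∧ ¬q ∧ r) ∨ (¬p ∧ q ∧ r)

/-- Exactly one of three propositions holds. -/
def ExactlyOne (p q r : Prop) : Prop :=
  (p ∧ ¬q ∧ ¬r) ∨ (¬p ∧ q ∧ ¬r) ∨ (¬p ∧ ¬q ∧ r)

/-- Trigon of type A: exactly two of the three pairs of its chords cross. -/
def TrigonA {N : ℕ} (f : ZMod N → ZMod N) (i j k : ZMod N) : Prop :=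
  Trigon f i j k ∧
    ExactlyTwo (Crosses f i (i + 1)) (Crosses f i (trigonThird f i j))
      (Crosses f (i + 1) (trigonThird f i j))

/-- Trigon of type B: exactly one pair of its chords crosses. -/
def TrigonB {N : ℕ} (f : ZMod N → ZMod N) (i j k : ZMod N) : Prop :=
  Trigon f i j k ∧
    ExactlyOne (Crosses f i (i + 1)) (Crosses f i (trigonThird f i j))
      (Crosses f (i + 1) (trigonThird f i j))

/-- Trigon of type C: its three chords pairwise cross. -/
def TrigonC {N : ℕ} (f : ZMod N → ZMod N) (i j k : ZMod N) : Prop :=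
  Trigon f i j k ∧
    Crosses f i (i + 1) ∧ Crosses f i (trigonThird f i j) ∧
      Crosses f (i + 1) (trigonThird f i j)

/-- Trigon of type D: no two of its chords cross. -/
def TrigonD {N : ℕ} (f : ZMod N → ZMod N) (i j k : ZMod N) : Prop :=
  Trigon f i j k ∧
    ¬ Crosses f i (i + 1) ∧ ¬ Crosses f i (trigonThird f i j) ∧
      ¬ Crosses f (i + 1) (trigonThird f i j)

/-!
Each pair of chords of a trigon meets at one of its three corners `(x, x + 1)`, and the pair
crosses exactly when `x` is joined to the corner that follows cyclically. In a trigon of type B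
exactly one corner is of this kind; let `p` be its first point, `b = f p` the first point of the
next corner and `c` the first point of the last one, so that the chords are `{p, b}`,
`{p + 1, c + 1}` and `{b + 1, c}`. The I-move at `p` reverses the arc from `p` to `b`, whose last
point is `p + 1`; afterwards `p + 1` is followed by `b + 1`, while `c, c + 1` stay consecutive
outside the arc. Hence `{p + 1, c + 1}` and `{b + 1, c}` become a coherent bigon.

Locating this configuration is a finite case analysis: the chords match the corners in one of
eight ways, and the corners of `j` and `k` may follow `i` in either order. Measuring every point
by its distance from `i` turns each crossing into inequalities between natural numbers.
-/

/-- `x` lies strictly inside the arc that runs upwards from `a` to `b`, wrapping around from the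
largest residue to `0` when `b < a`. -/
def CycBetween (a x b : ℕ) : Prop :=
  a < x ∧ x < b ∨ b < a ∧ (a < x ∨ x < b)

section Coordinates

variable {N : ℕ} [NeZero N]

theorem val_sub_add_val_sub (z a x : ZMod N) :
    (x - a).val + (a - z).val = (x - z).val ∨ (x - a).val + (a - z).val = (x - z).val + N := by
  have hsum : x - z = (x - a) + (a - z) := by ring
  rcases lt_or_ge ((x - a).val + (a - z).val) N with h | h
  · exact .inl (by rw [hsum, ZMod.val_add_of_lt h])
  · exact .inr (by rw [hsum, ZMod.val_add_val_of_le h])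

theorem val_sub_inj {z a b : ZMod N} : (a - z).val = (b - z).val ↔ a = b :=
  (ZMod.val_injective N).eq_iff.trans sub_left_inj

theorem val_add_one_sub [Fact (1 < N)] {x z : ZMod N} (h : x + 1 ≠ z) :
    (x + 1 - z).val = (x - z).val + 1 := by
  have hz : (x + 1 - z).val ≠ 0 := by rwa [Ne, ZMod.val_eq_zero, sub_eq_zero]
  have hsplit := val_sub_add_val_sub z x (x + 1)
  rw [add_sub_cancel_left, ZMod.val_one] at hsplit
  have := ZMod.val_lt (x - z)
  omega

theorem inArc_iff_cycBetween (z : ZMod N) {a b x : ZMod N} :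
    InArc a b x ↔ CycBetween (a - z).val (x - z).val (b - z).val := by
  have := val_sub_add_val_sub z a x
  have := val_sub_add_val_sub z a b
  have := ZMod.val_lt (x - a); have := ZMod.val_lt (b - a)
  have := ZMod.val_lt (x - z); have := ZMod.val_lt (b - z); have := ZMod.val_lt (a - z)
  unfold InArc CycBetween
  omega

theorem crosses_iff_cycBetween (z : ZMod N) {f : ZMod N → ZMod N} {a c : ZMod N} :
    Crosses f a c ↔ (c - z).val ≠ (a - z).val ∧ (c - z).val ≠ (f a - z).val ∧
      (f c - z).val ≠ (a - z).val ∧ (f c - z).val ≠ (f a - z).val ∧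
      Xor (CycBetween (a - z).val (c - z).val (f a - z).val)
        (CycBetween (a - z).val (f c - z).val (f a - z).val) := by
  simp only [Crosses, inArc_iff_cycBetween z, Ne, val_sub_inj]
  exact Iff.rfl

end Coordinates

section TrigonSet

variable {N : ℕ} {i j k : ZMod N}

theorem trigonSet_swap (i j k : ZMod N) : trigonSet j i k = trigonSet i j k := by
  ext; simp only [trigonSet, Finset.mem_insert, Finset.mem_singleton]; tauto

theorem trigonSet_rotate (i j k : ZMod N) : trigonSet j k i = trigonSet i j k := by
  ext; simp only [trigonSet, Finset.mem_insert, Finset.mem_singleton]; tauto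

theorem nodup_of_card_trigonSet (h : (trigonSet i j k).card = 6) :
    [i, i + 1, j, j + 1, k, k + 1].Nodup := by
  rw [← Multiset.coe_nodup, ← Multiset.toFinset_card_eq_card_iff_nodup]
  simpa [trigonSet] using h

theorem erase_erase_trigonSet (h : (trigonSet i j k).card = 6) :
    ((trigonSet i j k).erase i).erase j = {i + 1, j + 1, k, k + 1} := by
  have hd := nodup_of_card_trigonSet h
  simp only [List.nodup_cons, List.mem_cons, List.not_mem_nil, or_false, not_or] at hd
  ext x
  simp only [trigonSet, Finset.mem_erase, Finset.mem_insert, Finset.mem_singleton]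
  grind

theorem six_le_of_card_trigonSet [NeZero N] (h : (trigonSet i j k).card = 6) : 6 ≤ N := by
  simpa [h] using Finset.card_le_univ (trigonSet i j k)

theorem positions_of_card_trigonSet [NeZero N] (h : (trigonSet i j k).card = 6) :
    (i + 1 - i).val = 1 ∧ (j + 1 - i).val = (j - i).val + 1 ∧
      (k + 1 - i).val = (k - i).val + 1 ∧ 2 ≤ (j - i).val ∧ 2 ≤ (k - i).val ∧
      (j - i).val + 1 < N ∧ (k - i).val + 1 < N ∧
      ((j - i).val + 2 ≤ (k - i).val ∨ (k - i).val + 2 ≤ (j - i).val) := by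
  have : Fact (1 < N) := ⟨by have := six_le_of_card_trigonSet h; omega⟩
  have hd := nodup_of_card_trigonSet h
  simp only [List.nodup_cons, List.mem_cons, List.not_mem_nil, or_false, not_or] at hd
  have c0 : (i - i).val = 0 := by rw [sub_self, ZMod.val_zero]
  have c1 : (i + 1 - i).val = 1 := by rw [add_sub_cancel_left, ZMod.val_one]
  have cj1 : (j + 1 - i).val = (j - i).val + 1 := val_add_one_sub (Ne.symm hd.1.2.2.1)
  have ck1 : (k + 1 - i).val = (k - i).val + 1 := val_add_one_sub (Ne.symm hd.1.2.2.2.2)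
  simp only [← val_sub_inj (z := i), c0, c1, cj1, ck1] at hd
  have hjN : (j - i).val + 1 < N := cj1 ▸ ZMod.val_lt _
  have hkN : (k - i).val + 1 < N := ck1 ▸ ZMod.val_lt _
  refine ⟨c1, cj1, ck1, ?_, ?_, hjN, hkN, ?_⟩ <;> omega

end TrigonSet

section IMove

variable {n : ℕ} {a b x : ZMod (2 * n)}

theorem imoveEmb_imoveProj (hn : 2 ≤ n) (hba : b ≠ a) (hxa : x ≠ a) (hxb : x ≠ b) :
    imoveEmb n a b (imoveProj n a b x) = x := by
  have : NeZero (2 * n) := ⟨by omega⟩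
  have hd : (b - a).val ≠ 0 := by rwa [Ne, ZMod.val_eq_zero, sub_eq_zero]
  have hu : (x - a).val ≠ 0 := by rwa [Ne, ZMod.val_eq_zero, sub_eq_zero]
  have hud : (x - a).val ≠ (b - a).val := by rwa [Ne, val_sub_inj]
  have := ZMod.val_lt (x - a); have := ZMod.val_lt (b - a)
  have hx : a + (((x - a).val : ℕ) : ZMod (2 * n)) = x := by
    rw [ZMod.natCast_zmod_val, add_sub_cancel]
  unfold imoveProj imoveEmb
  split_ifs with h1 h2 h2
  · rw [ZMod.val_natCast_of_lt (by omega), show (b - a).val - 1 - ((b - a).val - 1 - (x - a).val)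
      = (x - a).val by omega, hx]
  · rw [ZMod.val_natCast_of_lt (by omega)] at h2; omega
  · rw [ZMod.val_natCast_of_lt (by omega)] at h2; omega
  · rw [ZMod.val_natCast_of_lt (by omega), Nat.sub_add_cancel (by omega), hx]

theorem imoveProj_injOn (hn : 2 ≤ n) (hba : b ≠ a) :
    Set.InjOn (imoveProj n a b) {x | x ≠ a ∧ x ≠ b} := fun x hx y hy hxy => by
  rw [← imoveEmb_imoveProj hn hba hx.1 hx.2, hxy, imoveEmb_imoveProj hn hba hy.1 hy.2]

theorem iMove_imoveProj (hn : 2 ≤ n) {f : ZMod (2 * n) → ZMod (2 * n)} (hfa : f a ≠ a)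
    (hxa : x ≠ a) (hxf : x ≠ f a) :
    IMove f a (imoveProj n a (f a) x) = imoveProj n a (f a) (f x) := by
  rw [IMove, imoveEmb_imoveProj hn hfa hxa hxf]

theorem imoveProj_right_add_one (hn : 2 ≤ n) (hb : 2 ≤ (b - a).val) (hb1 : b + 1 ≠ a) :
    imoveProj n a b (b + 1) = imoveProj n a b (a + 1) + 1 := by
  have : NeZero (2 * n) := ⟨by omega⟩
  have : Fact (1 < 2 * n) := ⟨by omega⟩
  have h1 : (a + 1 - a).val = 1 := by rw [add_sub_cancel_left, ZMod.val_one]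
  unfold imoveProj
  rw [val_add_one_sub hb1, h1, if_neg (by omega), if_pos (by omega), ← Nat.cast_succ]
  congr 1
  omega

theorem imoveProj_add_one_of_lt (hn : 2 ≤ n) (hba : b ≠ a) (hx : (b - a).val < (x - a).val)
    (hx1 : x + 1 ≠ a) : imoveProj n a b (x + 1) = imoveProj n a b x + 1 := by
  have : NeZero (2 * n) := ⟨by omega⟩
  have : Fact (1 < 2 * n) := ⟨by omega⟩
  have hd : (b - a).val ≠ 0 := by rwa [Ne, ZMod.val_eq_zero, sub_eq_zero]
  unfold imoveProj
  rw [val_add_one_sub hx1, if_neg (by omega), if_neg (by omega), ← Nat.cast_succ]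
  congr 1
  omega

theorem coherentBigon_iMove (hn : 2 ≤ n) {f : ZMod (2 * n) → ZMod (2 * n)} {p c : ZMod (2 * n)}
    (hp1 : f (p + 1) = c + 1) (hfp1 : f (f p + 1) = c) (harc : InArc p c (f p))
    (hcard : (trigonSet p (f p) c).card = 6) :
    CoherentBigon (IMove f p) (imoveProj n p (f p) (p + 1)) (imoveProj n p (f p) c) ∧
      ({imoveProj n p (f p) (p + 1), imoveProj n p (f p) c, imoveProj n p (f p) (p + 1) + 1,
          imoveProj n p (f p) c + 1} : Set (ZMod (2 * (n - 1)))) =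
        imoveProj n p (f p) '' ↑(((trigonSet p (f p) c).erase p).erase (f p)) := by
  have : NeZero (2 * n) := ⟨by omega⟩
  have : Fact (1 < 2 * n) := ⟨by omega⟩
  set b := f p
  set π := imoveProj n p b
  have hd := nodup_of_card_trigonSet hcard
  simp only [List.nodup_cons, List.mem_cons, List.not_mem_nil, or_false, not_or] at hd
  obtain ⟨⟨hp_1, hp_b, hp_b1, -, hp_c1⟩, ⟨hp1_b, hp1_b1, hp1_c, hp1_c1⟩, ⟨hb_b1, -, -⟩,
    ⟨hb1_c, hb1_c1⟩, hc_c1, -⟩ := hd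
  have h1 : (p + 1 - p).val = 1 := by rw [add_sub_cancel_left, ZMod.val_one]
  have hb2 : 2 ≤ (b - p).val := by
    have : (b - p).val ≠ 1 := by rw [← h1, Ne, val_sub_inj]; exact Ne.symm hp1_b
    have := harc.1; omega
  have hc : (b - p).val < (c - p).val := harc.2
  have hpair := erase_erase_trigonSet hcard
  have himage : ({π (p + 1), π c, π (p + 1) + 1, π c + 1} : Finset _) =
      (((trigonSet p b c).erase p).erase b).image π := by
    rw [hpair, ← imoveProj_right_add_one hn hb2 (Ne.symm hp_b1),
      ← imoveProj_add_one_of_lt hn (Ne.symm hp_b) hc (Ne.symm hp_c1)]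
    simp only [Finset.image_insert, Finset.image_singleton]
    rw [Finset.insert_comm (π c)]
  have hinj : Set.InjOn π ↑(((trigonSet p b c).erase p).erase b) := by
    refine (imoveProj_injOn hn (Ne.symm hp_b)).mono fun x hx => ?_
    simp only [Finset.coe_erase, Set.mem_sdiff, Set.mem_singleton_iff] at hx
    exact ⟨hx.1.2, hx.2⟩
  refine ⟨⟨?_, ?_, ?_⟩, ?_⟩
  · rw [iMove_imoveProj hn (Ne.symm hp_b) (Ne.symm hp_1) hp1_b, hp1,
      imoveProj_add_one_of_lt hn (Ne.symm hp_b) hc (Ne.symm hp_c1)]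
  · rw [← imoveProj_right_add_one hn hb2 (Ne.symm hp_b1),
      iMove_imoveProj hn (Ne.symm hp_b) (Ne.symm hp_b1) (Ne.symm hb_b1), hfp1]
  · rw [himage, Finset.card_image_of_injOn hinj, hpair]
    rw [Finset.card_insert_of_notMem (by simp [hp1_b1, hp1_c, hp1_c1]),
      Finset.card_insert_of_notMem (by simp [hb1_c, hb1_c1]), Finset.card_pair hc_c1]
  · rw [← Finset.coe_image, ← himage]
    push_cast
    rfl

end IMove

section Trigon

variable {N : ℕ} {f : ZMod N → ZMod N} {i j k : ZMod N}

theorem Trigon.matching (hinv : Function.Involutive f) (hfree : ∀ a, f a ≠ a)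
    (ht : Trigon f i j k) :
    (f i = j ∧ f (i + 1) = k ∧ f (j + 1) = k + 1) ∨
    (f i = j ∧ f (i + 1) = k + 1 ∧ f (j + 1) = k) ∨
    (f i = j + 1 ∧ f (i + 1) = k ∧ f j = k + 1) ∨
    (f i = j + 1 ∧ f (i + 1) = k + 1 ∧ f j = k) ∨
    (f i = k ∧ f (i + 1) = j ∧ f (j + 1) = k + 1) ∨
    (f i = k ∧ f (i + 1) = j + 1 ∧ f j = k + 1) ∨
    (f i = k + 1 ∧ f (i + 1) = j ∧ f (j + 1) = k) ∨
    (f i = k + 1 ∧ f (i + 1) = j + 1 ∧ f j = k) := by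
  obtain ⟨hcard, hmap, hi, hj, hk⟩ := ht
  have hd := nodup_of_card_trigonSet hcard
  simp only [List.nodup_cons, List.mem_cons, List.not_mem_nil, or_false, not_or] at hd
  have hff : ∀ x, f (f x) = x := hinv
  have hmem : ∀ x ∈ trigonSet i j k, f x = i ∨ f x = i + 1 ∨ f x = j ∨ f x = j + 1 ∨
      f x = k ∨ f x = k + 1 := by
    simpa only [trigonSet, Finset.mem_insert, Finset.mem_singleton] using hmap
  have := hmem i (by simp [trigonSet])
  have := hmem (i + 1) (by simp [trigonSet])
  have := hmem j (by simp [trigonSet])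
  have := hmem (j + 1) (by simp [trigonSet])
  have := hmem k (by simp [trigonSet])
  have := hmem (k + 1) (by simp [trigonSet])
  clear hmem hmap hcard
  grind (splits := 40)

theorem TrigonB.exists_crossingCorner [NeZero N] (hinv : Function.Involutive f)
    (hfree : ∀ a, f a ≠ a) (ht : TrigonB f i j k) :
    ∃ p b c, trigonSet p b c = trigonSet i j k ∧ f p = b ∧ f (p + 1) = c + 1 ∧ f (b + 1) = c ∧
      InArc p c b := by
  obtain ⟨htri, hB⟩ := ht
  obtain ⟨c1, cj1, ck1, hj2, hk2, hjN, hkN, hst⟩ := positions_of_card_trigonSet htri.1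
  have c0 : (i - i).val = 0 := by rw [sub_self, ZMod.val_zero]
  have hd := nodup_of_card_trigonSet htri.1
  simp only [List.nodup_cons, List.mem_cons, List.not_mem_nil, or_false, not_or] at hd
  simp only [inArc_iff_cycBetween i, CycBetween]
  have hsymm : ∀ {x y}, f x = y → f y = x := fun h => h ▸ hinv _
  rcases htri.matching hinv hfree with ⟨e1, e2, e3⟩ | ⟨e1, e2, e3⟩ | ⟨e1, e2, e3⟩ | ⟨e1, e2, e3⟩ |
    ⟨e1, e2, e3⟩ | ⟨e1, e2, e3⟩ | ⟨e1, e2, e3⟩ | ⟨e1, e2, e3⟩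
  all_goals
    simp only [trigonThird, e1, e2, hd, or_true, or_false, ↓reduceIte] at hB
    simp only [ExactlyOne, crosses_iff_cycBetween i, CycBetween, xor_def, e1, e2, e3,
      c0, c1, cj1, ck1, not_and_or, not_or, not_not] at hB
    rcases hst with hst | hst
  -- The ten configurations of type A, C or D contradict `hB`.
  all_goals try omega
  · exact ⟨j, i, k, trigonSet_swap i j k, hsymm e1, e3, e2, by omega⟩
  · exact ⟨i, j, k, rfl, e1, e2, e3, by omega⟩
  · exact ⟨k, j, i, by rw [trigonSet_swap, trigonSet_rotate], hsymm e3, hsymm e2, hsymm e1, by omega⟩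
  · exact ⟨k, i, j, by rw [trigonSet_rotate, trigonSet_rotate], hsymm e1, hsymm e3, e2, by omega⟩
  · exact ⟨i, k, j, by rw [← trigonSet_swap, trigonSet_rotate, trigonSet_rotate], e1, e2, hsymm e3,
      by omega⟩
  · exact ⟨j, k, i, trigonSet_rotate i j k, e3, hsymm e2, hsymm e1, by omega⟩

end Trigon

/-- If a chord diagram contains a trigon of type B, then there is a chord of the trigon
such that the I-move at that chord produces a chord diagram containing a coherent bigon,
formed by the (images of the) remaining two chords of the trigon
(content of the proof of Lemma 2.4). -/
theorem trigonB_imove_coherentBigon {n : ℕ} (hn : 1 ≤ n)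
    (f : ZMod (2 * n) → ZMod (2 * n)) (hinv : Function.Involutive f)
    (hfree : ∀ a, f a ≠ a) (i j k : ZMod (2 * n)) (ht : TrigonB f i j k) :
    ∃ p ∈ trigonSet i j k, ∃ i' j' : ZMod (2 * (n - 1)),
      CoherentBigon (IMove f p) i' j' ∧
      ({i', j', i' + 1, j' + 1} : Set (ZMod (2 * (n - 1)))) =
        imoveProj n p (f p) '' ↑(((trigonSet i j k).erase p).erase (f p)) := by
  have : NeZero (2 * n) := ⟨by omega⟩
  obtain ⟨p, b, c, hset, rfl, hp1, hb1, harc⟩ := ht.exists_crossingCorner hinv hfree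
  have hcard : (trigonSet p (f p) c).card = 6 := hset ▸ ht.1.1
  have hn2 : 2 ≤ n := by have := six_le_of_card_trigonSet hcard; omega
  rw [← hset]
  exact ⟨p, by simp [trigonSet], _, _, coherentBigon_iMove hn2 hp1 hb1 harc hcard⟩

end SphericalCurveReductivity
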